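/- Let n ≥ 2, Σ_1,…,Σ_n ∈ S_+(d), p_1,…,p_n ∈ (0,1) with Σ_i p_i = 1, and let Γ ∈ R^{nd×nd} be symmetric with d×d blocks Γ_{(ij)} such that Γ_{(ii)} = Σ_i for each i, each 2d×2d block matrix [[Γ_{(ii)}, Γ_{(ij)}],[Γ_{(ji)}, Γ_{(jj)}]] is positive semi-definite for i < j, and Σ ≤ A Γ A* with A = (p_1 I_d, …, p_n I_d). Then for every ξ ∈ R^d, ξ*Σξ ≤ (Σ_i p_i √(ξ*Σ_i ξ))². -/

import Mathlib

open MeasureTheory ProbabilityTheory Matrix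

noncomputable def stdGaussianPi (d : ℕ) : Measure (Fin d → ℝ) :=
  Measure.pi fun _ => gaussianReal 0 1

/-- The Gaussian law `N_d(m, S)` on `ℝ^d`, defined as the image of the standard Gaussian
by `z ↦ m + S^{1/2} z`. -/
noncomputable def gaussianPi {d : ℕ} (m : Fin d → ℝ) {S : Matrix (Fin d) (Fin d) ℝ}
    (hS : S.PosSemidef) : Measure (Fin d → ℝ) :=
  Measure.map (fun z => m + ((hS.1.eigenvectorUnitary : Matrix (Fin d) (Fin d) ℝ) *
    diagonal (fun i => Real.sqrt (hS.1.eigenvalues i)) *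
    (star (hS.1.eigenvectorUnitary : Matrix (Fin d) (Fin d) ℝ))).mulVec z) (stdGaussianPi d)

/-- Convex order between measures: `μ ≤_cx ν`. -/
def ConvexOrder {E : Type*} [NormedAddCommGroup E] [NormedSpace ℝ E] [MeasurableSpace E]
    (μ ν : Measure E) : Prop :=
  ∀ φ : E → ℝ, ConvexOn ℝ Set.univ φ → Integrable φ μ → Integrable φ ν →
    ∫ x, φ x ∂μ ≤ ∫ x, φ x ∂ν

/-! Write `q i j = ξ ⬝ᵥ Γ_(ij) *ᵥ ξ`. Each `2 × 2` block matrix of `Γ` is positive semidefinite, so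
Cauchy–Schwarz for the form it defines gives `q i j ≤ √(q i i) * √(q j j)` for all `i, j`. Hence
`ξ ⬝ᵥ Σ *ᵥ ξ ≤ ξ ⬝ᵥ A Γ Aᵀ *ᵥ ξ = ∑ i j, p i * p j * q i j ≤ (∑ i, p i * √(q i i))²`. -/

namespace Matrix

variable {m n ι R : Type*}

theorem PosSemidef.dotProduct_mulVec_le_sqrt_mul_sqrt [Fintype n] {M : Matrix n n ℝ}
    (hM : M.PosSemidef) (x y : n → ℝ) : x ⬝ᵥ M *ᵥ y ≤ √(x ⬝ᵥ M *ᵥ x) * √(y ⬝ᵥ M *ᵥ y) := by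
  classical
  have hsq := LinearMap.BilinForm.apply_sq_le_of_symm (toBilin' M)
    (fun v => by simpa [toBilin'_apply'] using hM.dotProduct_mulVec_nonneg v)
    (LinearMap.BilinForm.isSymm_iff.mp
      (isSymm_toBilin'_iff_isSymm.mpr (isHermitian_iff_isSymm.mp hM.1))) x y
  simp only [toBilin'_apply'] at hsq
  rw [← Real.sqrt_mul (by simpa using hM.dotProduct_mulVec_nonneg x)]
  exact Real.le_sqrt_of_sq_le hsq

theorem PosSemidef.fromBlocks_dotProduct_mulVec₁₂_le [Fintype m] [Fintype n]
    {A : Matrix m m ℝ} {B : Matrix m n ℝ} {C : Matrix n m ℝ} {D : Matrix n n ℝ}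
    (h : (fromBlocks A B C D).PosSemidef) (x : m → ℝ) (y : n → ℝ) : x ⬝ᵥ B *ᵥ y ≤ √(x ⬝ᵥ A *ᵥ x) * √(y ⬝ᵥ D *ᵥ y) := by
  simpa [fromBlocks_mulVec] using
    h.dotProduct_mulVec_le_sqrt_mul_sqrt (Sum.elim x 0) (Sum.elim 0 y)

theorem PosSemidef.fromBlocks_dotProduct_mulVec₂₁_le [Fintype m] [Fintype n]
    {A : Matrix m m ℝ} {B : Matrix m n ℝ} {C : Matrix n m ℝ} {D : Matrix n n ℝ}
    (h : (fromBlocks A B C D).PosSemidef) (x : m → ℝ) (y : n → ℝ) : y ⬝ᵥ C *ᵥ x ≤ √(y ⬝ᵥ D *ᵥ y) * √(x ⬝ᵥ A *ᵥ x) := by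
  simpa [fromBlocks_mulVec] using
    h.dotProduct_mulVec_le_sqrt_mul_sqrt (Sum.elim 0 y) (Sum.elim x 0)

def block (Γ : Matrix (ι × m) (ι × m) R) (i j : ι) : Matrix m m R :=
  of fun k l => Γ (i, k) (j, l)

variable (m) in
def scaledIdentityRow [Zero R] [One R] [Mul R] [DecidableEq m] (p : ι → R) :
    Matrix m (ι × m) R :=
  of fun k il => p il.1 * if k = il.2 then 1 else 0

theorem scaledIdentityRow_transpose_mulVec [Fintype m] [CommSemiring R] [DecidableEq m]
    (p : ι → R) (ξ : m → R) : (scaledIdentityRow m p)ᵀ *ᵥ ξ = fun il => p il.1 * ξ il.2 := by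
  ext il
  simp [scaledIdentityRow, mulVec, dotProduct, mul_comm]

theorem dotProduct_scaledIdentityRow_mul_mulVec [Fintype m] [Fintype ι] [CommSemiring R]
    [DecidableEq m] (p : ι → R) (Γ : Matrix (ι × m) (ι × m) R) (ξ : m → R) :
    ξ ⬝ᵥ (scaledIdentityRow m p * Γ * (scaledIdentityRow m p)ᵀ) *ᵥ ξ =
      ∑ i, ∑ j, p i * p j * (ξ ⬝ᵥ block Γ i j *ᵥ ξ) := by
  rw [← mulVec_mulVec, ← mulVec_mulVec, dotProduct_mulVec, ← mulVec_transpose,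
    scaledIdentityRow_transpose_mulVec]
  simp only [block, dotProduct, mulVec, of_apply, Fintype.sum_prod_type, Finset.mul_sum]
  refine Finset.sum_congr rfl fun i _ => ?_
  rw [Finset.sum_comm]
  exact Finset.sum_congr rfl fun j _ => Finset.sum_congr rfl fun k _ =>
    Finset.sum_congr rfl fun l _ => by ring

theorem dotProduct_block_mulVec_le_sqrt_mul_sqrt [Fintype m] [LinearOrder ι]
    {Γ : Matrix (ι × m) (ι × m) ℝ} (hdiag : ∀ i, (block Γ i i).PosSemidef)
    (hblocks : ∀ i j, i < j →
      (fromBlocks (block Γ i i) (block Γ i j) (block Γ j i) (block Γ j j)).PosSemidef)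
    (ξ : m → ℝ) (i j : ι) :
    ξ ⬝ᵥ block Γ i j *ᵥ ξ ≤ √(ξ ⬝ᵥ block Γ i i *ᵥ ξ) * √(ξ ⬝ᵥ block Γ j j *ᵥ ξ) := by
  rcases lt_trichotomy i j with hij | rfl | hji
  · exact (hblocks i j hij).fromBlocks_dotProduct_mulVec₁₂_le ξ ξ
  · exact (hdiag i).dotProduct_mulVec_le_sqrt_mul_sqrt ξ ξ
  · exact (hblocks j i hji).fromBlocks_dotProduct_mulVec₂₁_le ξ ξ

end Matrix

theorem Finset.sum_sum_mul_mul_le_sq_sum {ι : Type*} (s : Finset ι) {w a : ι → ℝ}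
    {q : ι → ι → ℝ} (hw : ∀ i ∈ s, 0 ≤ w i) (hq : ∀ i ∈ s, ∀ j ∈ s, q i j ≤ a i * a j) :
    ∑ i ∈ s, ∑ j ∈ s, w i * w j * q i j ≤ (∑ i ∈ s, w i * a i) ^ 2 := by
  rw [sq, Finset.sum_mul_sum]
  refine Finset.sum_le_sum fun i hi => Finset.sum_le_sum fun j hj => ?_
  calc w i * w j * q i j ≤ w i * w j * (a i * a j) := by
        gcongr
        · exact mul_nonneg (hw i hi) (hw j hj)
        · exact hq i hi j hj
    _ = w i * a i * (w j * a j) := by ring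

theorem stmt8_general {n d : ℕ}
    {S : Matrix (Fin d) (Fin d) ℝ} {Ss : Fin n → Matrix (Fin d) (Fin d) ℝ}
    (hSs : ∀ i, (Ss i).PosSemidef)
    (p : Fin n → ℝ) (hp : ∀ i, p i ∈ Set.Ioo (0:ℝ) 1)
    (Γ : Matrix (Fin n × Fin d) (Fin n × Fin d) ℝ)
    (hΓdiag : ∀ i : Fin n, (Matrix.of fun k l => Γ (i, k) (i, l)) = Ss i)
    (hΓblocks : ∀ i j : Fin n, i < j →
      (Matrix.fromBlocks (Matrix.of fun k l => Γ (i, k) (i, l))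
        (Matrix.of fun k l => Γ (i, k) (j, l))
        (Matrix.of fun k l => Γ (j, k) (i, l))
        (Matrix.of fun k l => Γ (j, k) (j, l))).PosSemidef)
    (hdom : ((Matrix.of fun (k : Fin d) (il : Fin n × Fin d) =>
        p il.1 * (if k = il.2 then (1:ℝ) else 0)) * Γ *
        (Matrix.of fun (k : Fin d) (il : Fin n × Fin d) =>
        p il.1 * (if k = il.2 then (1:ℝ) else 0))ᵀ - S).PosSemidef) :
    ∀ ξ : Fin d → ℝ,
      ξ ⬝ᵥ S.mulVec ξ ≤ (∑ i, p i * Real.sqrt (ξ ⬝ᵥ (Ss i).mulVec ξ)) ^ 2 := by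
  intro ξ
  have hblock_diag (i : Fin n) : block Γ i i = Ss i := hΓdiag i
  set A := scaledIdentityRow (Fin d) p
  calc ξ ⬝ᵥ S *ᵥ ξ ≤ ξ ⬝ᵥ (A * Γ * Aᵀ) *ᵥ ξ := by
        have := hdom.dotProduct_mulVec_nonneg ξ
        rwa [star_trivial, sub_mulVec, dotProduct_sub, sub_nonneg] at this
    _ = ∑ i, ∑ j, p i * p j * (ξ ⬝ᵥ block Γ i j *ᵥ ξ) :=
        dotProduct_scaledIdentityRow_mul_mulVec p Γ ξ
    _ ≤ (∑ i, p i * √(ξ ⬝ᵥ block Γ i i *ᵥ ξ)) ^ 2 :=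
        Finset.univ.sum_sum_mul_mul_le_sq_sum (fun i _ => (hp i).1.le) fun i _ j _ =>
          dotProduct_block_mulVec_le_sqrt_mul_sqrt (fun i => hblock_diag i ▸ hSs i) hΓblocks
            ξ i j
    _ = (∑ i, p i * √(ξ ⬝ᵥ Ss i *ᵥ ξ)) ^ 2 := by simp only [hblock_diag]

theorem stmt8 {n d : ℕ} (hn : 2 ≤ n)
    {S : Matrix (Fin d) (Fin d) ℝ} {Ss : Fin n → Matrix (Fin d) (Fin d) ℝ}
    (hS : S.PosSemidef) (hSs : ∀ i, (Ss i).PosSemidef)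
    (p : Fin n → ℝ) (hp : ∀ i, p i ∈ Set.Ioo (0:ℝ) 1) (hp1 : ∑ i, p i = 1)
    (Γ : Matrix (Fin n × Fin d) (Fin n × Fin d) ℝ) (hΓsymm : Γ.IsSymm)
    (hΓdiag : ∀ i : Fin n, (Matrix.of fun k l => Γ (i, k) (i, l)) = Ss i)
    (hΓblocks : ∀ i j : Fin n, i < j →
      (Matrix.fromBlocks (Matrix.of fun k l => Γ (i, k) (i, l))
        (Matrix.of fun k l => Γ (i, k) (j, l))
        (Matrix.of fun k l => Γ (j, k) (i, l))
        (Matrix.of fun k l => Γ (j, k) (j, l))).PosSemidef)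
    (hdom : ((Matrix.of fun (k : Fin d) (il : Fin n × Fin d) =>
        p il.1 * (if k = il.2 then (1:ℝ) else 0)) * Γ *
        (Matrix.of fun (k : Fin d) (il : Fin n × Fin d) =>
        p il.1 * (if k = il.2 then (1:ℝ) else 0))ᵀ - S).PosSemidef) :
    ∀ ξ : Fin d → ℝ,
      ξ ⬝ᵥ S.mulVec ξ ≤ (∑ i, p i * Real.sqrt (ξ ⬝ᵥ (Ss i).mulVec ξ)) ^ 2 :=
  stmt8_general hSs p hp Γ hΓdiag hΓblocks hdom
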